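/- arXiv:1801.07865 — 4 statements merged into one kernel-verified Lean document; each statement's English description precedes it below -/
import Mathlib

section
/- Let F be a field, let k ≤ n be positive integers, and let G be a k×n matrix over F such that every k columns of G are linearly independent (i.e., G is the generator matrix of an MDS code). For each i ∈ {1,…,k} let S_i ⊆ {1,…,n} be a set of column indices such that G_{ij} = 0 for all j ∈ S_i. Then for every nonempty subset I ⊆ {1,…,k}, one has k − |I| ≥ |⋂_{i∈I} S_i|. -/
/-!
If the rows in `I` all vanish on a common set `T` of columns, then the columns indexed by `T`
lie in the subspace of vectors vanishing on `I`, which has dimension `k - |I|`. When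
`|T| > k - |I|`, some `k - |I| + 1 ≤ k` of these columns are linearly dependent, contradicting
the MDS property.
-/

open Module

section VanishingSubspace

variable {F ι : Type*} [Field F] [Fintype ι]

theorem finrank_ker_funLeft_subtype_val (I : Finset ι) :
    finrank F (LinearMap.ker (LinearMap.funLeft F F (Subtype.val : I → ι))) =
      Fintype.card ι - I.card := by
  have hsurj : LinearMap.range (LinearMap.funLeft F F (Subtype.val : I → ι)) = ⊤ :=
    LinearMap.range_eq_top.mpr
      (LinearMap.funLeft_surjective_of_injective F F _ Subtype.val_injective)
  have := LinearMap.finrank_range_add_finrank_ker (LinearMap.funLeft F F (Subtype.val : I → ι))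
  rw [hsurj, finrank_top, finrank_fintype_fun_eq_card, finrank_fintype_fun_eq_card,
    Fintype.card_coe] at this
  omega

theorem LinearIndependent.card_le_card_sub_of_forall_eq_zero {κ : Type*} [Fintype κ]
    {v : κ → ι → F} (hv : LinearIndependent F v) (I : Finset ι)
    (hzero : ∀ j, ∀ i ∈ I, v j i = 0) :
    Fintype.card κ ≤ Fintype.card ι - I.card := by
  have hspan : Submodule.span F (Set.range v) ≤
      LinearMap.ker (LinearMap.funLeft F F (Subtype.val : I → ι)) := by
    rw [Submodule.span_le]
    rintro _ ⟨j, rfl⟩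
    ext i
    exact hzero j i i.2
  calc Fintype.card κ = finrank F (Submodule.span F (Set.range v)) :=
        (finrank_span_eq_card hv).symm
    _ ≤ _ := Submodule.finrank_mono hspan
    _ = Fintype.card ι - I.card := finrank_ker_funLeft_subtype_val I

end VanishingSubspace

theorem LinearIndepOn.of_forall_card_eq {F ι V : Type*} [Field F] [AddCommGroup V] [Module F V]
    [Fintype ι] {v : ι → V} {k : ℕ} (hk : k ≤ Fintype.card ι)
    (h : ∀ s : Finset ι, s.card = k → LinearIndepOn F v s)
    {t : Finset ι} (ht : t.card ≤ k) : LinearIndepOn F v t := by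
  obtain ⟨s, hts, hs⟩ := Finset.exists_superset_card_eq ht hk
  exact (h s hs).mono (Finset.coe_subset.mpr hts)

theorem mds_support_condition_general (F : Type*) [Field F] (k n : ℕ) (hkn : k ≤ n)
    (G : Matrix (Fin k) (Fin n) F)
    (hMDS : ∀ s : Finset (Fin n), s.card = k →
      LinearIndependent F (fun j : s => fun i : Fin k => G i j))
    (S : Fin k → Finset (Fin n))
    (hzero : ∀ i : Fin k, ∀ j : Fin n, j ∈ S i → G i j = 0) :
    ∀ I : Finset (Fin k), ∀ hI : I.Nonempty,
      ((I.inf' hI S).card : ℤ) ≤ (k : ℤ) - I.card := by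
  intro I hI
  set T := I.inf' hI S
  have hIpos := hI.card_pos
  have hIk : I.card ≤ k := by simpa using I.card_le_univ
  suffices T.card + I.card ≤ k by omega
  by_contra! hlarge
  obtain ⟨T', hT'T, hT'card⟩ := Finset.exists_subset_card_eq (s := T) (n := k - I.card + 1)
    (by omega)
  have hind : LinearIndepOn F (fun j i => G i j) (T' : Set (Fin n)) :=
    LinearIndepOn.of_forall_card_eq (by simpa using hkn) hMDS (by omega)
  have hT'zero : ∀ j : T', ∀ i ∈ I, G i j = 0 := fun j i hi =>
    hzero i j (Finset.inf'_le S hi (hT'T j.2))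
  have hcard := hind.card_le_card_sub_of_forall_eq_zero I hT'zero
  simp only [Finset.coe_sort_coe, Fintype.card_coe, Fintype.card_fin, hT'card] at hcard
  omega

/-- If every `k` columns of a `k × n` matrix `G` over a field `F` are
linearly independent (i.e. `G` generates an MDS code), and `S i` is a set of positions of
zeros in row `i` of `G`, then for every nonempty `I ⊆ [k]` we have
`k - |I| ≥ |⋂_{i ∈ I} S i|`. -/
theorem mds_support_condition (F : Type*) [Field F] (k n : ℕ) (hk : 1 ≤ k) (hkn : k ≤ n)
    (G : Matrix (Fin k) (Fin n) F)
    (hMDS : ∀ s : Finset (Fin n), s.card = k →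
      LinearIndependent F (fun j : s => fun i : Fin k => G i j))
    (S : Fin k → Finset (Fin n))
    (hzero : ∀ i : Fin k, ∀ j : Fin n, j ∈ S i → G i j = 0) :
    ∀ I : Finset (Fin k), ∀ hI : I.Nonempty,
      ((I.inf' hI S).card : ℤ) ≤ (k : ℤ) - I.card :=
  mds_support_condition_general F k n hkn G hMDS S hzero
end

section
/- Let m ≥ 2, k ≥ 1, n ≥ 1 be integers, let r_1,…,r_m be positive integers with Σ_{i=1}^m r_i = k, and let S_1,…,S_m ⊆ {1,…,n} satisfy k − r_i − |S_i| ≥ 0 for each i and the condition: for every nonempty I ⊆ {1,…,m}, k − Σ_{i∈I} r_i ≥ |⋂_{i∈I} S_i|. Set n' = n + Σ_{i=1}^m (k − r_i − |S_i|), let S''_1,…,S''_m be any partition of {n+1,…,n'} with |S''_i| = k − r_i − |S_i|, and set S'_i = S_i ∪ S''_i (so |S'_i| = k − r_i). Then the family (S'_1,…,S'_m) also satisfies: for every nonempty I ⊆ {1,…,m}, k − Σ_{i∈I} r_i ≥ |⋂_{i∈I} S'_i|. -/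
/-- Padding an instance of the grouped GM-MDS condition with fresh symbols,
so that each set gets size exactly `k - r i`, preserves the GM-MDS condition. -/
theorem gmmds_padding (m n k : ℕ) (hm : 2 ≤ m) (hn : 1 ≤ n) (hk : 1 ≤ k)
    (r : Fin m → ℕ) (hr : ∀ i, 1 ≤ r i) (hrsum : ∑ i, r i = k)
    (S : Fin m → Finset ℕ) (hSsub : ∀ i, S i ⊆ Finset.Icc 1 n)
    (hsize : ∀ i, (S i).card + r i ≤ k)
    (hcond : ∀ I : Finset (Fin m), ∀ hI : I.Nonempty,
      ((I.inf' hI S).card : ℤ) ≤ (k : ℤ) - ∑ i ∈ I, (r i : ℤ))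
    (n' : ℕ) (hn' : n' = n + ∑ i, (k - r i - (S i).card))
    (S'' : Fin m → Finset ℕ)
    (hdisj : ∀ i j : Fin m, i ≠ j → Disjoint (S'' i) (S'' j))
    (hunion : Finset.univ.biUnion S'' = Finset.Icc (n + 1) n')
    (hS''card : ∀ i, (S'' i).card = k - r i - (S i).card)
    (S' : Fin m → Finset ℕ) (hS' : ∀ i, S' i = S i ∪ S'' i) :
    ∀ I : Finset (Fin m), ∀ hI : I.Nonempty,
      ((I.inf' hI S').card : ℤ) ≤ (k : ℤ) - ∑ i ∈ I, (r i : ℤ) := by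
  intro I hI
  have hS''sub : ∀ i, S'' i ⊆ Finset.Icc (n + 1) n' := by
    intro i
    rw [← hunion]
    exact Finset.subset_biUnion_of_mem S'' (Finset.mem_univ i)
  have hdisjS : ∀ i j : Fin m, Disjoint (S i) (S'' j) := by
    intro i j
    rw [Finset.disjoint_left]
    intro x hx hx'
    have h1 := (Finset.mem_Icc.mp (hSsub i hx)).2
    have h2 := (Finset.mem_Icc.mp (hS''sub j hx')).1
    omega
  rcases eq_or_lt_of_le (Finset.one_le_card.mpr hI) with h1 | h2
  · -- singleton case
    obtain ⟨i, hIe⟩ := Finset.card_eq_one.mp h1.symm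
    subst hIe
    rw [Finset.inf'_singleton, Finset.sum_singleton, hS' i,
      Finset.card_union_of_disjoint (hdisjS i i), hS''card i]
    have := hsize i
    omega
  · -- |I| ≥ 2
    have hsub : I.inf' hI S' ⊆ I.inf' hI S := by
      intro x hx
      have hx' : ∀ i ∈ I, x ∈ S' i := by
        intro i hi
        exact Finset.mem_of_subset (Finset.inf'_le S' hi) hx
      have hxS : ∀ i ∈ I, x ∈ S i := by
        intro i hi
        rcases Finset.mem_union.mp (by rw [← hS' i]; exact hx' i hi) with h | h
        · exact h
        · exfalso
          obtain ⟨j, hj, hji⟩ := Finset.exists_mem_ne h2 i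
          rcases Finset.mem_union.mp (by rw [← hS' j]; exact hx' j hj) with h' | h'
          · exact Finset.disjoint_left.mp (hdisjS j i) h' h
          · exact Finset.disjoint_left.mp (hdisj j i hji) h' h
      exact (Finset.mem_inf' hI).mpr hxS
    calc ((I.inf' hI S').card : ℤ) ≤ ((I.inf' hI S).card : ℤ) := by
          exact_mod_cast Finset.card_le_card hsub
      _ ≤ (k : ℤ) - ∑ i ∈ I, (r i : ℤ) := hcond I hI
end

section
/- Let m ≥ 2, n ≥ 1, k ≥ 1 be integers and let S_1,…,S_m be finite multisets with elements in {1,…,n} such that |S_i| ≤ k−1 for all i, Σ_{i=1}^m |S_i| = (m−1)k, and ⋂_{i=1}^m S_i = ∅ (multiset intersection, taking minimum multiplicities). Let S_0 = ⋂_{i=1}^{m−1} S_i, S'_i = S_i \ S_0 (multiset difference) for i ∈ {1,…,m}, and k' = k − |S_0|. Suppose that the only polynomials q'_1,…,q'_m ∈ K[x] with deg q'_i ≤ k'−1−|S'_i| for all i (where q'_i = 0 is required whenever k'−1−|S'_i| < 0) and Σ_{i=1}^m q'_i·p_{S'_i} = 0 are q'_1 = ⋯ = q'_m = 0. Then the only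 polynomials q_1,…,q_m ∈ K[x] with deg q_i ≤ k−1−|S_i| for all i and Σ_{i=1}^m q_i·p_{S_i} = 0 are q_1 = ⋯ = q_m = 0. -/
/-- `K = Frac(ℚ[α₁,…,αₙ])`, the field of rational functions in `n` indeterminates over `ℚ`. -/
noncomputable abbrev Kf (n : ℕ) : Type := FractionRing (MvPolynomial (Fin n) ℚ)

/-- For a multiset `S` with elements in `{1,…,n}`, the polynomial
`p_S(x) = ∏_{j ∈ S} (x - α_j)` (product taken with multiplicity). -/
noncomputable def pS {n : ℕ} (S : Multiset (Fin n)) : Polynomial (Kf n) :=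
  (S.map (fun j => Polynomial.X -
    Polynomial.C (algebraMap (MvPolynomial (Fin n) ℚ) (Kf n) (MvPolynomial.X j)))).prod

open Polynomial

noncomputable def alg (n : ℕ) (j : Fin n) : Kf n :=
  algebraMap (MvPolynomial (Fin n) ℚ) (Kf n) (MvPolynomial.X j)

lemma alg_injective (n : ℕ) : Function.Injective (alg n) := by
  intro a b h
  exact MvPolynomial.X_injective
    (IsFractionRing.injective (MvPolynomial (Fin n) ℚ) (Kf n) h)

lemma pS_def {n : ℕ} (S : Multiset (Fin n)) :
    pS S = (S.map (fun j => X - C (alg n j))).prod := rfl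

lemma pS_zero (n : ℕ) : pS (0 : Multiset (Fin n)) = 1 := rfl

lemma pS_cons {n : ℕ} (a : Fin n) (A : Multiset (Fin n)) :
    pS (a ::ₘ A) = (X - C (alg n a)) * pS A := by
  simp [pS_def, Multiset.map_cons, Multiset.prod_cons]

lemma pS_add {n : ℕ} (A B : Multiset (Fin n)) : pS (A + B) = pS A * pS B := by
  simp [pS_def, Multiset.map_add, Multiset.prod_add]

lemma pS_monic {n : ℕ} (A : Multiset (Fin n)) : (pS A).Monic := by
  exact monic_multiset_prod_of_monic _ _ (fun j _ => monic_X_sub_C _)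

lemma pS_ne_zero {n : ℕ} (A : Multiset (Fin n)) : pS A ≠ 0 := (pS_monic A).ne_zero

lemma pS_natDegree {n : ℕ} (A : Multiset (Fin n)) : (pS A).natDegree = A.card := by
  rw [pS_def, natDegree_multiset_prod_of_monic]
  · simp [Multiset.map_map, Function.comp]
  · intro f hf
    obtain ⟨j, _, rfl⟩ := Multiset.mem_map.mp hf
    exact monic_X_sub_C _

lemma coprime_single {n : ℕ} (a : Fin n) (B : Multiset (Fin n)) (h : a ∉ B) :
    IsCoprime (X - C (alg n a)) (pS B) := by
  induction B using Multiset.induction with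
  | empty => simpa [pS_zero] using isCoprime_one_right
  | cons b B ih =>
    rw [pS_cons]
    refine IsCoprime.mul_right ?_ (ih (fun hc => h (Multiset.mem_cons_of_mem hc)))
    have hab : a ≠ b := fun hc => h (hc ▸ Multiset.mem_cons_self b B)
    exact isCoprime_X_sub_C_of_isUnit_sub
      ((sub_ne_zero_of_ne (fun hc => hab (alg_injective n hc))).isUnit)

lemma coprime_pS {n : ℕ} (A B : Multiset (Fin n)) (h : A ∩ B = 0) :
    IsCoprime (pS A) (pS B) := by
  induction A using Multiset.induction with
  | empty => simpa [pS_zero] using isCoprime_one_left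
  | cons a A ih =>
    have haB : a ∉ B := by
      intro hc
      have h1 := congrArg (Multiset.count a) h
      rw [Multiset.count_inter, Multiset.count_cons_self, Multiset.count_zero] at h1
      rcases Nat.min_eq_zero_iff.mp h1 with h2 | h2
      · omega
      · exact absurd (Multiset.count_pos.mpr hc) (by omega)
    have hAB : A ∩ B = 0 := by
      ext x
      rw [Multiset.count_inter, Multiset.count_zero]
      have h1 := congrArg (Multiset.count x) h
      rw [Multiset.count_inter, Multiset.count_zero] at h1
      have h2 : Multiset.count x A ≤ Multiset.count x (a ::ₘ A) := by
        rw [Multiset.count_cons]; omega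
      exact Nat.eq_zero_of_le_zero (le_trans (min_le_min h2 le_rfl) h1.le)
    rw [pS_cons]
    exact IsCoprime.mul_left (coprime_single a B haB) (ih hAB)


/-- If `⋂_{i=1}^m S_i = ∅`, `S₀ = ⋂_{i=1}^{m-1} S_i`, `S'_i = S_i \ S₀`
(multiset difference) and `k' = k - |S₀|`, then triviality of the polynomial relations for
`(S'_i, k')` implies triviality of the polynomial relations for `(S_i, k)`. -/
theorem multiset_reduction_det (m n k : ℕ) (hm : 2 ≤ m) (hn : 1 ≤ n) (hk : 1 ≤ k)
    (S : Fin m → Multiset (Fin n))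
    (hcard : ∀ i, ((S i).card : ℤ) ≤ (k : ℤ) - 1)
    (hsum : ∑ i, (S i).card = (m - 1) * k)
    (hu : (Finset.univ : Finset (Fin m)).Nonempty)
    (hint : Finset.univ.inf' hu S = 0)
    (hne : (Finset.univ.erase (⟨m - 1, by omega⟩ : Fin m)).Nonempty)
    (S0 : Multiset (Fin n))
    (hS0 : S0 = (Finset.univ.erase (⟨m - 1, by omega⟩ : Fin m)).inf' hne S)
    (S' : Fin m → Multiset (Fin n)) (hS' : ∀ i, S' i = S i - S0)
    (k' : ℤ) (hk' : k' = (k : ℤ) - S0.card)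
    (htriv' : ∀ q' : Fin m → Polynomial (Kf n),
      (∀ i, q' i ≠ 0 → ((q' i).natDegree : ℤ) ≤ k' - 1 - ((S' i).card : ℤ)) →
      ∑ i, q' i * pS (S' i) = 0 → ∀ i, q' i = 0) :
    ∀ q : Fin m → Polynomial (Kf n),
      (∀ i, q i ≠ 0 → ((q i).natDegree : ℤ) ≤ (k : ℤ) - 1 - ((S i).card : ℤ)) →
      ∑ i, q i * pS (S i) = 0 → ∀ i, q i = 0 := by
  intro q hdeg hrel
  set j : Fin m := ⟨m - 1, by omega⟩ with hj
  have hS0le : ∀ i, i ≠ j → S0 ≤ S i := by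
    intro i hi
    rw [hS0]
    exact Finset.inf'_le _ (Finset.mem_erase.mpr ⟨hi, Finset.mem_univ i⟩)
  have hdecomp : ∀ i, i ≠ j → S i = S0 + S' i := by
    intro i hi
    rw [hS' i, add_comm]
    exact (tsub_add_cancel_of_le (hS0le i hi)).symm
  -- intersection of S0 and S j is empty
  have hinter : S0 ∩ S j = 0 := by
    have h2 : S j ⊓ S0 ≤ 0 := by
      rw [← hint]
      apply Finset.le_inf'
      intro b _
      by_cases hb : b = j
      · subst hb; exact inf_le_left
      · exact le_trans inf_le_right (hS0le b hb)
    have h3 := Multiset.le_zero.mp h2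
    rw [Multiset.inf_eq_inter] at h3
    rw [Multiset.inter_comm]
    exact h3
  have hS'j : S' j = S j := by
    rw [hS' j]
    ext x
    have h1 := congrArg (Multiset.count x) hinter
    rw [Multiset.count_inter, Multiset.count_zero] at h1
    rw [Multiset.count_sub]
    omega
  -- split the relation
  have hsplit : q j * pS (S j) +
      (∑ i ∈ Finset.univ.erase j, q i * pS (S' i)) * pS S0 = 0 := by
    rw [Finset.sum_mul]
    have : ∀ i ∈ Finset.univ.erase j, q i * pS (S' i) * pS S0 = q i * pS (S i) := by
      intro i hi
      rw [hdecomp i (Finset.mem_erase.mp hi).1, pS_add]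
      ring
    rw [Finset.sum_congr rfl this,
      Finset.add_sum_erase _ (fun i => q i * pS (S i)) (Finset.mem_univ j)]
    exact hrel
  set T : Polynomial (Kf n) := ∑ i ∈ Finset.univ.erase j, q i * pS (S' i) with hT
  have hdvd : pS S0 ∣ q j := by
    have h1 : pS S0 ∣ q j * pS (S j) := by
      refine ⟨-T, ?_⟩
      have := hsplit
      linear_combination hsplit
    exact (coprime_pS S0 (S j) hinter).dvd_of_dvd_mul_right h1
  obtain ⟨c, hc⟩ := hdvd
  set q' : Fin m → Polynomial (Kf n) := fun i => if i = j then c else q i with hq'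
  have hrel' : ∑ i, q' i * pS (S' i) = 0 := by
    have h2 : ∑ i, q' i * pS (S' i) = c * pS (S' j) + T := by
      rw [← Finset.add_sum_erase _ _ (Finset.mem_univ j), hT]
      congr 1
      · simp [hq']
      · refine Finset.sum_congr rfl fun i hi => ?_
        simp [hq', (Finset.mem_erase.mp hi).1]
    rw [h2, hS'j]
    have h3 : (c * pS (S j) + T) * pS S0 = 0 := by
      rw [add_mul]
      have : c * pS (S j) * pS S0 = q j * pS (S j) := by rw [hc]; ring
      rw [this]
      linear_combination hsplit
    rcases mul_eq_zero.mp h3 with h | h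
    · exact h
    · exact absurd h (pS_ne_zero S0)
  have hdeg' : ∀ i, q' i ≠ 0 → ((q' i).natDegree : ℤ) ≤ k' - 1 - ((S' i).card : ℤ) := by
    intro i hi
    by_cases hij : i = j
    · simp only [hq', if_pos hij] at hi ⊢
      rw [hij, hS'j]
      have hqj : q j ≠ 0 := by rw [hc]; exact mul_ne_zero (pS_ne_zero S0) hi
      have hdq := hdeg j hqj
      have hnd : (q j).natDegree = S0.card + c.natDegree := by
        rw [hc, natDegree_mul (pS_ne_zero S0) hi, pS_natDegree]
      omega
    · simp only [hq', if_neg hij] at hi ⊢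
      have hdq := hdeg i hi
      have hcards : (S i).card = S0.card + (S' i).card := by
        rw [hdecomp i hij, Multiset.card_add]
      omega
  have hall := htriv' q' hdeg' hrel'
  intro i
  by_cases hij : i = j
  · have := hall i
    simp only [hq', if_pos hij] at this
    rw [hij, hc, this, mul_zero]
  · have := hall i
    simpa [hq', if_neg hij] using this
end

section
/- Let m ≥ 2, n ≥ 1, k ≥ 1 be integers and let S_1,…,S_m be finite multisets with elements in {1,…,n} such that ⋂_{i=1}^m S_i = ∅ (multiset intersection). Let S_0 = ⋂_{i=1}^{m−1} S_i, S'_i = S_i \ S_0 (multiset difference) for i ∈ {1,…,m}, and k' = k − |S_0|. Then the family (S_1,…,S_m) satisfies the condition [for every nonempty I ⊆ {1,…,m}: k − |⋂_{i∈I} S_i| ≥ Σ_{i∈I} (k − |S_i|)] if and only if the family (S'_1,…,S'_m) satisfies the corresponding condition with k replaced by k' [for every nonempty I ⊆ {1,…,m}: k' − |⋂_{i∈I} S'_i| ≥ Σ_{i∈I} (k' − |S'_i|)]. -/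
/-!
Subtracting `S₀` lowers `k` by `|S₀|` and each `|S_i|` by `|S_i ∩ S₀|`, which is `|S₀|` for
`i < m` (there `S₀ ≤ S_i`) and `0` for `i = m` (there `S_m ∩ S₀ = ⋂ S_i = ∅`). The same dichotomy
holds for `⋂_{i ∈ I} S_i` according as `m ∉ I` or `m ∈ I`, and in both cases the slack
`k - |⋂_{i ∈ I} S_i| - ∑_{i ∈ I} (k - |S_i|)` of the GM-MDS inequality is unchanged.
-/

open Finset

namespace Multiset

variable {α : Type*} [DecidableEq α]

theorem sub_inter_sub (s t u : Multiset α) : (s - u) ∩ (t - u) = s ∩ t - u := by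
  ext a
  simp only [count_inter, count_sub]
  omega

theorem inf'_sub {ι : Type*} {I : Finset ι} (hI : I.Nonempty) (f : ι → Multiset α)
    (u : Multiset α) : I.inf' hI (fun i => f i - u) = I.inf' hI f - u :=
  (apply_inf'_eq_inf'_comp hI (· - u) fun s t => (sub_inter_sub s t u).symm).symm

theorem intCast_card_sub (s u : Multiset α) :
    ((s - u).card : ℤ) = s.card - (s ∩ u).card := by
  have h := congrArg card (sub_add_inter s u)
  rw [card_add] at h
  omega

end Multiset

section GMMDS

variable {ι α : Type*} [DecidableEq α]

def gmmdsSlack (k : ℤ) (S : ι → Multiset α) (I : Finset ι) (hI : I.Nonempty) : ℤ :=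
  k - (I.inf' hI S).card - ∑ i ∈ I, (k - (S i).card)

theorem gmmdsSlack_sub_eq [DecidableEq ι] {S : ι → Multiset α} {u : Multiset α} {t : ι}
    (hle : ∀ i ≠ t, u ≤ S i) (hdisj : Disjoint (S t) u) (k : ℤ) (I : Finset ι)
    (hI : I.Nonempty) :
    gmmdsSlack (k - u.card) (fun i => S i - u) I hI = gmmdsSlack k S I hI := by
  set e : Multiset α → ℤ := fun s => (s ∩ u).card - u.card with he
  have he_of_le {s : Multiset α} (h : u ≤ s) : e s = 0 := by
    change ((s ⊓ u).card : ℤ) - u.card = 0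
    rw [inf_eq_right.2 h, sub_self]
  have he_of_disjoint {s : Multiset α} (h : Disjoint s u) : e s = -u.card := by
    simp only [he, Multiset.inter_eq_zero_iff_disjoint.2 h, Multiset.card_zero, Nat.cast_zero,
      zero_sub]
  have hsum : ∑ i ∈ I, e (S i) = if t ∈ I then -(u.card : ℤ) else 0 := by
    rw [← sum_ite_eq' I t fun _ => -(u.card : ℤ)]
    refine sum_congr rfl fun i _ => ?_
    split_ifs with hi
    · exact hi ▸ he_of_disjoint hdisj
    · exact he_of_le (hle i hi)
  have hinf : e (I.inf' hI S) = if t ∈ I then -(u.card : ℤ) else 0 := by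
    split_ifs with ht
    · exact he_of_disjoint (hdisj.mono_left (inf'_le S ht))
    · exact he_of_le (le_inf' hI S fun i hi => hle i (ne_of_mem_of_not_mem hi ht))
  have hterms : ∑ i ∈ I, (k - u.card - ((S i - u).card : ℤ))
      = ∑ i ∈ I, (k - (S i).card) + ∑ i ∈ I, e (S i) := by
    rw [← sum_add_distrib]
    exact sum_congr rfl fun i _ => by rw [Multiset.intCast_card_sub]; ring
  simp only [gmmdsSlack, Multiset.inf'_sub, hterms]
  rw [Multiset.intCast_card_sub, hsum, ← hinf]
  ring

end GMMDS

/-- For multisets `S₁,…,S_m` with `⋂_{i=1}^m S_i = ∅`,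
`S₀ = ⋂_{i=1}^{m-1} S_i`, `S'_i = S_i \ S₀` and `k' = k - |S₀|`, the family `(S_i)` satisfies
the GM-MDS condition for `k` iff the family `(S'_i)` satisfies it for `k'`. -/
theorem multiset_reduction_condition (m n k : ℕ) (hm : 2 ≤ m)
    (S : Fin m → Multiset (Fin n))
    (hu : (Finset.univ : Finset (Fin m)).Nonempty)
    (hint : Finset.univ.inf' hu S = 0)
    (hne : (Finset.univ.erase (⟨m - 1, by omega⟩ : Fin m)).Nonempty)
    (S0 : Multiset (Fin n))
    (hS0 : S0 = (Finset.univ.erase (⟨m - 1, by omega⟩ : Fin m)).inf' hne S)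
    (S' : Fin m → Multiset (Fin n)) (hS' : ∀ i, S' i = S i - S0)
    (k' : ℤ) (hk' : k' = (k : ℤ) - S0.card) :
    (∀ I : Finset (Fin m), ∀ hI : I.Nonempty,
        (k : ℤ) - ((I.inf' hI S).card : ℤ) ≥ ∑ i ∈ I, ((k : ℤ) - ((S i).card : ℤ)))
      ↔ (∀ I : Finset (Fin m), ∀ hI : I.Nonempty,
        k' - ((I.inf' hI S').card : ℤ) ≥ ∑ i ∈ I, (k' - ((S' i).card : ℤ))) := by
  subst hk'
  obtain rfl : S' = fun i => S i - S0 := funext hS'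
  set t : Fin m := ⟨m - 1, by omega⟩
  have hle : ∀ i ≠ t, S0 ≤ S i := fun i hi =>
    hS0 ▸ inf'_le S (mem_erase.2 ⟨hi, mem_univ i⟩)
  have hdisj : Disjoint (S t) S0 := fun x hxt hx0 =>
    (le_inf' hu S fun i _ => if hi : i = t then hi ▸ hxt else hx0.trans (hle i hi)).trans_eq hint
  refine forall_congr' fun I => forall_congr' fun hI => ?_
  have hslack := gmmdsSlack_sub_eq hle hdisj k I hI
  unfold gmmdsSlack at hslack
  rw [ge_iff_le, ← sub_nonneg, ← hslack, sub_nonneg]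
end
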